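/- arXiv:2010.04703 — 3 statements merged into one kernel-verified Lean document; each statement's English description precedes it below -/
import Mathlib

section
/- In the dyadic setup, fix positive integers N, M and set T = N + M + NM. Order the random vectors as Z_t = N^{-1} s̄c_t for t = 1,…,N; Z_{N+j} = M^{-1} s̄p_j for j = 1,…,M; and Z_{N+M+(i−1)M+j} = (NM)^{-1}(s_{ij} − s̄_{ij}) for i = 1,…,N, j = 1,…,M. Then (Z_t)_{t=1}^T is a martingale difference sequence with respect to its natural filtration: for every t = 1,…,T, E[Z_t | σ(Z_1,…,Z_{t−1})] = 0 almost surely. -/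
open MeasureTheory ProbabilityTheory Filter
open scoped BigOperators NNReal Topology

namespace SparseNet

/-- Index type for the three independent families of the dyadic setup:
consumer draws `(W_i, A_i)`, product draws `(X_j, B_j)` and idiosyncratic
draws `V_{ij}`. -/
abbrev Idx : Type := ℕ ⊕ ℕ ⊕ (ℕ × ℕ)

/-- Codomain of each member of the combined family. -/
def idxType (𝒲 𝒜 𝒳 ℬ 𝒱 : Type) : Idx → Type
  | Sum.inl _ => 𝒲 × 𝒜
  | Sum.inr (Sum.inl _) => 𝒳 × ℬ
  | Sum.inr (Sum.inr _) => 𝒱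

/-- Measurable-space structure on the codomains. -/
def idxMS {𝒲 𝒜 𝒳 ℬ 𝒱 : Type} [MeasurableSpace 𝒲] [MeasurableSpace 𝒜]
    [MeasurableSpace 𝒳] [MeasurableSpace ℬ] [MeasurableSpace 𝒱] :
    ∀ t : Idx, MeasurableSpace (idxType 𝒲 𝒜 𝒳 ℬ 𝒱 t)
  | Sum.inl _ => inferInstanceAs (MeasurableSpace (𝒲 × 𝒜))
  | Sum.inr (Sum.inl _) => inferInstanceAs (MeasurableSpace (𝒳 × ℬ))
  | Sum.inr (Sum.inr _) => inferInstanceAs (MeasurableSpace 𝒱)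

/-- The combined family of random elements. -/
def fam {Ω 𝒲 𝒜 𝒳 ℬ 𝒱 : Type} (W : ℕ → Ω → 𝒲) (A : ℕ → Ω → 𝒜) (X : ℕ → Ω → 𝒳)
    (B : ℕ → Ω → ℬ) (V : ℕ → ℕ → Ω → 𝒱) :
    ∀ t : Idx, Ω → idxType 𝒲 𝒜 𝒳 ℬ 𝒱 t
  | Sum.inl i => fun ω => (W i ω, A i ω)
  | Sum.inr (Sum.inl j) => fun ω => (X j ω, B j ω)
  | Sum.inr (Sum.inr ij) => V ij.1 ij.2

variable {Ω 𝒲 𝒜 𝒳 ℬ 𝒱 : Type} [MeasurableSpace Ω] [MeasurableSpace 𝒲]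
  [MeasurableSpace 𝒜] [MeasurableSpace 𝒳] [MeasurableSpace ℬ] [MeasurableSpace 𝒱]

/-- The dyadic setup: `(W_i, A_i)_{i≥1}` i.i.d., `(X_j, B_j)_{j≥1}` i.i.d.,
`(V_{ij})_{i,j≥1}` i.i.d., the three families mutually independent. -/
structure DyadicSetup (μ : Measure Ω) (W : ℕ → Ω → 𝒲) (A : ℕ → Ω → 𝒜)
    (X : ℕ → Ω → 𝒳) (B : ℕ → Ω → ℬ) (V : ℕ → ℕ → Ω → 𝒱) : Prop where
  measW : ∀ i, Measurable (W i)
  measA : ∀ i, Measurable (A i)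
  measX : ∀ j, Measurable (X j)
  measB : ∀ j, Measurable (B j)
  measV : ∀ i j, Measurable (V i j)
  indep : iIndepFun (m := idxMS) (fam W A X B V) μ
  identWA : ∀ i, IdentDistrib (fun ω => (W i ω, A i ω)) (fun ω => (W 1 ω, A 1 ω)) μ μ
  identXB : ∀ j, IdentDistrib (fun ω => (X j ω, B j ω)) (fun ω => (X 1 ω, B 1 ω)) μ μ
  identV : ∀ i j, IdentDistrib (V i j) (V 1 1) μ μ

variable (μ : Measure Ω) {d : ℕ}

/-- The score `s_{ij} = g(W_i, X_j, A_i, B_j, V_{ij})`. -/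
def score (g : 𝒲 → 𝒳 → 𝒜 → ℬ → 𝒱 → (Fin d → ℝ)) (W : ℕ → Ω → 𝒲) (A : ℕ → Ω → 𝒜)
    (X : ℕ → Ω → 𝒳) (B : ℕ → Ω → ℬ) (V : ℕ → ℕ → Ω → 𝒱) (i j : ℕ) :
    Ω → Fin d → ℝ :=
  fun ω => g (W i ω) (X j ω) (A i ω) (B j ω) (V i j ω)

/-- `s̄_{ij} = E[s_{ij} | W_i, X_j, A_i, B_j]`. -/
noncomputable def sbar (g : 𝒲 → 𝒳 → 𝒜 → ℬ → 𝒱 → (Fin d → ℝ)) (W : ℕ → Ω → 𝒲)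
    (A : ℕ → Ω → 𝒜) (X : ℕ → Ω → 𝒳) (B : ℕ → Ω → ℬ) (V : ℕ → ℕ → Ω → 𝒱)
    (i j : ℕ) : Ω → Fin d → ℝ :=
  μ[score g W A X B V i j |
    MeasurableSpace.comap (fun ω => (W i ω, X j ω, A i ω, B j ω)) inferInstance]

/-- `s̄c_i = E[s̄_{i1} | W_i, A_i]`. -/
noncomputable def sbarc (g : 𝒲 → 𝒳 → 𝒜 → ℬ → 𝒱 → (Fin d → ℝ)) (W : ℕ → Ω → 𝒲)
    (A : ℕ → Ω → 𝒜) (X : ℕ → Ω → 𝒳) (B : ℕ → Ω → ℬ) (V : ℕ → ℕ → Ω → 𝒱)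
    (i : ℕ) : Ω → Fin d → ℝ :=
  μ[sbar μ g W A X B V i 1 |
    MeasurableSpace.comap (fun ω => (W i ω, A i ω)) inferInstance]

/-- `s̄p_j = E[s̄_{1j} | X_j, B_j]`. -/
noncomputable def sbarp (g : 𝒲 → 𝒳 → 𝒜 → ℬ → 𝒱 → (Fin d → ℝ)) (W : ℕ → Ω → 𝒲)
    (A : ℕ → Ω → 𝒜) (X : ℕ → Ω → 𝒳) (B : ℕ → Ω → ℬ) (V : ℕ → ℕ → Ω → 𝒱)
    (j : ℕ) : Ω → Fin d → ℝ :=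
  μ[sbar μ g W A X B V 1 j |
    MeasurableSpace.comap (fun ω => (X j ω, B j ω)) inferInstance]

/-- The (cross-)covariance matrix `E[f h']` of two mean-zero random vectors. -/
noncomputable def covMat (f h : Ω → Fin d → ℝ) : Matrix (Fin d) (Fin d) ℝ :=
  Matrix.of fun a b => ∫ ω, f ω a * h ω b ∂μ

/-- The ordered triangular collection:
`Z_t = N⁻¹ s̄c_t` for `t = 1,…,N`; `Z_{N+j} = M⁻¹ s̄p_j` for `j = 1,…,M`;
`Z_{N+M+(i−1)M+j} = (NM)⁻¹ (s_{ij} − s̄_{ij})` for `i = 1,…,N`, `j = 1,…,M`. -/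
noncomputable def Zmds (g : 𝒲 → 𝒳 → 𝒜 → ℬ → 𝒱 → (Fin d → ℝ)) (W : ℕ → Ω → 𝒲)
    (A : ℕ → Ω → 𝒜) (X : ℕ → Ω → 𝒳) (B : ℕ → Ω → ℬ) (V : ℕ → ℕ → Ω → 𝒱)
    (N M t : ℕ) : Ω → Fin d → ℝ :=
  if t ≤ N then fun ω => (N : ℝ)⁻¹ • sbarc μ g W A X B V t ω
  else if t ≤ N + M then fun ω => (M : ℝ)⁻¹ • sbarp μ g W A X B V (t - N) ω
  else fun ω => ((N : ℝ) * M)⁻¹ •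
    (score g W A X B V ((t - N - M - 1) / M + 1) ((t - N - M - 1) % M + 1) ω -
      sbar μ g W A X B V ((t - N - M - 1) / M + 1) ((t - N - M - 1) % M + 1) ω)

/-- The natural filtration `σ(Z_1, …, Z_t)`. -/
noncomputable def natFilt (g : 𝒲 → 𝒳 → 𝒜 → ℬ → 𝒱 → (Fin d → ℝ)) (W : ℕ → Ω → 𝒲)
    (A : ℕ → Ω → 𝒜) (X : ℕ → Ω → 𝒳) (B : ℕ → Ω → ℬ) (V : ℕ → ℕ → Ω → 𝒱)
    (N M t : ℕ) : MeasurableSpace Ω :=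
  ⨆ r ∈ Finset.Icc 1 t, MeasurableSpace.comap (Zmds μ g W A X B V N M r) inferInstance

end SparseNet

/-! Each `Z_t` is measurable with respect to the members of the independent family it is built
from, and one of them — `(W_t, A_t)`, `(X_{t-N}, B_{t-N})` or `V_{ij}` — enters no earlier `Z_r`.
Hence it suffices to condition on all the other members of the family, a larger σ-algebra, and
use the tower property. In the first two blocks `Z_t` is centred and independent of that
σ-algebra. In the last block, the σ-algebra of everything but `V_{ij}` is that of
`(W_i, A_i, X_j, B_j)` joined with one independent of `s_{ij}`, so conditioning `s_{ij}` on it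
gives `s̄_{ij}`. -/

theorem MeasurableSpace.sup_eq_generateFrom_image2_inter {α : Type*} (m₁ m₂ : MeasurableSpace α) :
    m₁ ⊔ m₂ = MeasurableSpace.generateFrom
      (Set.image2 (· ∩ ·) {s | MeasurableSet[m₁] s} {s | MeasurableSet[m₂] s}) := by
  refine le_antisymm (sup_le ?_ ?_) (MeasurableSpace.generateFrom_le ?_)
  · exact fun s hs => MeasurableSpace.measurableSet_generateFrom
      ⟨s, hs, Set.univ, MeasurableSet.univ, Set.inter_univ s⟩
  · exact fun s hs => MeasurableSpace.measurableSet_generateFrom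
      ⟨Set.univ, MeasurableSet.univ, s, hs, Set.univ_inter s⟩
  · rintro _ ⟨s₁, h₁, s₂, h₂, rfl⟩
    exact (le_sup_left (b := m₂) _ h₁).inter (le_sup_right (a := m₁) _ h₂)

theorem isPiSystem_image2_inter_measurableSet {α : Type*} (m₁ m₂ : MeasurableSpace α) :
    IsPiSystem (Set.image2 (· ∩ ·) {s | MeasurableSet[m₁] s} {s | MeasurableSet[m₂] s}) := by
  rintro _ ⟨s₁, h₁, s₂, h₂, rfl⟩ _ ⟨t₁, g₁, t₂, g₂, rfl⟩ -
  exact ⟨s₁ ∩ t₁, h₁.inter g₁, s₂ ∩ t₂, h₂.inter g₂, Set.inter_inter_inter_comm _ _ _ _⟩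

namespace MeasureTheory

variable {α E : Type*} [NormedAddCommGroup E] [NormedSpace ℝ E] [CompleteSpace E]
  {m₁ m₁' m₂ m : MeasurableSpace α} {ν : Measure α} [IsFiniteMeasure ν] {f : α → E}

theorem setIntegral_inter_eq_measureReal_smul_of_indep
    (hm₁' : m₁' ≤ m) (hm₂ : m₂ ≤ m) (hindep : Indep m₁' m₂ ν)
    (hf : Integrable f ν) (hfm : StronglyMeasurable[m₁'] f) {s₁ s₂ : Set α}
    (hs₁ : MeasurableSet[m₁'] s₁) (hs₂ : MeasurableSet[m₂] s₂) :
    ∫ x in s₁ ∩ s₂, f x ∂ν = ν.real s₂ • ∫ x in s₁, f x ∂ν := by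
  have hind : ν[s₁.indicator f | m₂] =ᵐ[ν] fun _ => ∫ x, s₁.indicator f x ∂ν :=
    condExp_indep_eq hm₁' hm₂ (hfm.indicator hs₁) hindep
  calc ∫ x in s₁ ∩ s₂, f x ∂ν = ∫ x in s₂, s₁.indicator f x ∂ν := by
        rw [setIntegral_indicator (hm₁' _ hs₁), Set.inter_comm]
    _ = ∫ x in s₂, (ν[s₁.indicator f | m₂]) x ∂ν :=
        (setIntegral_condExp hm₂ (hf.indicator (hm₁' _ hs₁)) hs₂).symm
    _ = ν.real s₂ • ∫ x in s₁, f x ∂ν := by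
        rw [setIntegral_congr_ae (hm₂ _ hs₂) (hind.mono fun x hx _ => hx), setIntegral_const,
          integral_indicator (hm₁' _ hs₁)]

theorem condExp_sup_ae_eq_of_indep (hm₁' : m₁' ≤ m) (hm₂ : m₂ ≤ m) (hm₁ : m₁ ≤ m₁')
    (hindep : Indep m₁' m₂ ν) (hf : Integrable f ν) (hfm : StronglyMeasurable[m₁'] f) :
    ν[f | m₁ ⊔ m₂] =ᵐ[ν] ν[f | m₁] := by
  have hm₁m : m₁ ≤ m := hm₁.trans hm₁'
  have hsup : m₁ ⊔ m₂ ≤ m := sup_le hm₁m hm₂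
  refine (ae_eq_condExp_of_forall_setIntegral_eq hsup hf
    (fun s _ _ => integrable_condExp.integrableOn) (fun s hs _ => ?_)
    (stronglyMeasurable_condExp.mono (le_sup_left : m₁ ≤ m₁ ⊔ m₂)).aestronglyMeasurable).symm
  induction s, hs using MeasurableSpace.induction_on_inter
    (MeasurableSpace.sup_eq_generateFrom_image2_inter m₁ m₂)
    (isPiSystem_image2_inter_measurableSet m₁ m₂) with
  | empty => simp
  | basic _ hs =>
    obtain ⟨s₁, hs₁, s₂, hs₂, rfl⟩ := hs
    rw [setIntegral_inter_eq_measureReal_smul_of_indep hm₁' hm₂ hindep integrable_condExp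
        (stronglyMeasurable_condExp.mono hm₁) (hm₁ _ hs₁) hs₂,
      setIntegral_inter_eq_measureReal_smul_of_indep hm₁' hm₂ hindep hf hfm (hm₁ _ hs₁) hs₂,
      setIntegral_condExp hm₁m hf hs₁]
  | compl t ht ih =>
    rw [setIntegral_compl (hsup _ ht) integrable_condExp, setIntegral_compl (hsup _ ht) hf,
      ih (measure_lt_top ν t), integral_condExp hm₁m]
  | iUnion s hdisj hs ih =>
    rw [integral_iUnion (fun i => hsup _ (hs i)) hdisj integrable_condExp.integrableOn,
      integral_iUnion (fun i => hsup _ (hs i)) hdisj hf.integrableOn]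
    exact tsum_congr fun i => ih i (measure_lt_top ν _)

end MeasureTheory

namespace SparseNet

section Development

variable {Ω 𝒲 𝒜 𝒳 ℬ 𝒱 : Type} [MeasurableSpace 𝒲] [MeasurableSpace 𝒜] [MeasurableSpace 𝒳]
  [MeasurableSpace ℬ] {d : ℕ}

/-- `Z_t` for `t > N + M` is built from `s_{ij}`, where `t = N + M + (i - 1) M + j`. -/
def pairIndex (N M t : ℕ) : ℕ × ℕ := ((t - N - M - 1) / M + 1, (t - N - M - 1) % M + 1)

/-- The member of the combined family that first enters `Z_t`. -/
def freshIndex (N M t : ℕ) : Idx :=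
  if t ≤ N then .inl t else if t ≤ N + M then .inr (.inl (t - N)) else .inr (.inr (pairIndex N M t))

def zmdsSupport (N M t : ℕ) : Set Idx :=
  if t ≤ N + M then {freshIndex N M t}
  else {.inl (pairIndex N M t).1, .inr (.inl (pairIndex N M t).2), freshIndex N M t}

theorem eq_of_pairIndex_eq {N M r t : ℕ} (hr : N + M < r) (ht : N + M < t)
    (h : pairIndex N M r = pairIndex N M t) : r = t := by
  simp only [pairIndex, Prod.mk.injEq, add_left_inj] at h
  have hr' := Nat.div_add_mod (r - N - M - 1) M
  have ht' := Nat.div_add_mod (t - N - M - 1) M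
  rw [h.1, h.2] at hr'
  omega

theorem freshIndex_notMem_zmdsSupport {N M r t : ℕ} (hrt : r < t) :
    freshIndex N M t ∉ zmdsSupport N M r := by
  unfold zmdsSupport freshIndex
  split_ifs <;>
    simp only [Set.mem_insert_iff, Set.mem_singleton_iff, Sum.inl.injEq, Sum.inr.injEq,
      reduceCtorEq, not_or, or_false, false_or, or_self, not_false_eq_true] <;>
    first
    | omega
    | exact fun h => hrt.ne' (eq_of_pairIndex_eq (r := t) (t := r) (by omega) (by omega) h)

section ZmdsCases

variable [MeasurableSpace Ω] {μ : Measure Ω} {W : ℕ → Ω → 𝒲} {A : ℕ → Ω → 𝒜}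
  {X : ℕ → Ω → 𝒳} {B : ℕ → Ω → ℬ} {V : ℕ → ℕ → Ω → 𝒱} {g : 𝒲 → 𝒳 → 𝒜 → ℬ → 𝒱 → (Fin d → ℝ)}
  {N M t : ℕ}

theorem Zmds_of_le (h : t ≤ N) :
    Zmds μ g W A X B V N M t = (N : ℝ)⁻¹ • sbarc μ g W A X B V t := by
  simp only [Zmds, if_pos h]
  rfl

theorem Zmds_of_lt_of_le (h₁ : N < t) (h₂ : t ≤ N + M) :
    Zmds μ g W A X B V N M t = (M : ℝ)⁻¹ • sbarp μ g W A X B V (t - N) := by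
  simp only [Zmds, if_neg h₁.not_ge, if_pos h₂]
  rfl

theorem Zmds_of_lt (h : N + M < t) :
    Zmds μ g W A X B V N M t = ((N : ℝ) * M)⁻¹ •
      (score g W A X B V (pairIndex N M t).1 (pairIndex N M t).2 -
        sbar μ g W A X B V (pairIndex N M t).1 (pairIndex N M t).2) := by
  simp only [Zmds, if_neg (show ¬t ≤ N by omega), if_neg h.not_ge]
  rfl

end ZmdsCases

variable [MeasurableSpace 𝒱]

def familySigma (W : ℕ → Ω → 𝒲) (A : ℕ → Ω → 𝒜) (X : ℕ → Ω → 𝒳) (B : ℕ → Ω → ℬ)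
    (V : ℕ → ℕ → Ω → 𝒱) (S : Set Idx) : MeasurableSpace Ω :=
  ⨆ u ∈ S, (idxMS u).comap (fam W A X B V u)

variable {W : ℕ → Ω → 𝒲} {A : ℕ → Ω → 𝒜} {X : ℕ → Ω → 𝒳} {B : ℕ → Ω → ℬ}
  {V : ℕ → ℕ → Ω → 𝒱} {S T : Set Idx}

theorem comap_fam_le_familySigma {u : Idx} (hu : u ∈ S) :
    (idxMS u).comap (fam W A X B V u) ≤ familySigma W A X B V S :=
  le_biSup (fun u => (idxMS u).comap (fam W A X B V u)) hu

theorem familySigma_mono (hST : S ⊆ T) : familySigma W A X B V S ≤ familySigma W A X B V T :=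
  biSup_mono hST

theorem familySigma_union :
    familySigma W A X B V (S ∪ T) = familySigma W A X B V S ⊔ familySigma W A X B V T :=
  iSup_union

theorem measurable_WA_familySigma {i : ℕ} (hi : .inl i ∈ S) :
    Measurable[familySigma W A X B V S] fun ω => (W i ω, A i ω) :=
  measurable_iff_comap_le.mpr (comap_fam_le_familySigma hi)

theorem measurable_XB_familySigma {j : ℕ} (hj : .inr (.inl j) ∈ S) :
    Measurable[familySigma W A X B V S] fun ω => (X j ω, B j ω) :=
  measurable_iff_comap_le.mpr (comap_fam_le_familySigma hj)

theorem measurable_V_familySigma {i j : ℕ} (hij : .inr (.inr (i, j)) ∈ S) :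
    Measurable[familySigma W A X B V S] (V i j) :=
  measurable_iff_comap_le.mpr (comap_fam_le_familySigma hij)

theorem comap_WXAB_eq_familySigma (i j : ℕ) :
    MeasurableSpace.comap (fun ω => (W i ω, X j ω, A i ω, B j ω)) inferInstance =
      familySigma W A X B V {.inl i, .inr (.inl j)} := by
  refine le_antisymm (measurable_iff_comap_le.mp ?_) (iSup₂_le ?_)
  · have hWA : Measurable[familySigma W A X B V {.inl i, .inr (.inl j)}]
        fun ω => (W i ω, A i ω) := measurable_WA_familySigma (by simp)
    have hXB : Measurable[familySigma W A X B V {.inl i, .inr (.inl j)}]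
        fun ω => (X j ω, B j ω) := measurable_XB_familySigma (by simp)
    exact hWA.fst.prodMk (hXB.fst.prodMk (hWA.snd.prodMk hXB.snd))
  · have hq : Measurable[MeasurableSpace.comap (fun ω => (W i ω, X j ω, A i ω, B j ω))
        inferInstance] fun ω => (W i ω, X j ω, A i ω, B j ω) := comap_measurable _
    rintro u (rfl | rfl)
    · exact measurable_iff_comap_le.mp (hq.fst.prodMk hq.snd.snd.fst)
    · exact measurable_iff_comap_le.mp (hq.snd.fst.prodMk hq.snd.snd.snd)

theorem measurable_score_familySigma {g : 𝒲 → 𝒳 → 𝒜 → ℬ → 𝒱 → (Fin d → ℝ)}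
    (hg : Measurable fun p : 𝒲 × 𝒳 × 𝒜 × ℬ × 𝒱 => g p.1 p.2.1 p.2.2.1 p.2.2.2.1 p.2.2.2.2)
    {i j : ℕ} (hi : .inl i ∈ S) (hj : .inr (.inl j) ∈ S) (hij : .inr (.inr (i, j)) ∈ S) :
    Measurable[familySigma W A X B V S] (score g W A X B V i j) :=
  have hWA := measurable_WA_familySigma (X := X) (B := B) (V := V) hi
  have hXB := measurable_XB_familySigma (W := W) (A := A) (V := V) hj
  hg.comp (hWA.fst.prodMk (hXB.fst.prodMk (hWA.snd.prodMk (hXB.snd.prodMk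
    (measurable_V_familySigma hij)))))

namespace DyadicSetup

variable [mΩ : MeasurableSpace Ω] {μ : Measure Ω}

theorem comap_fam_le (hsetup : DyadicSetup μ W A X B V) (u : Idx) :
    (idxMS u).comap (fam W A X B V u) ≤ mΩ := by
  rcases u with i | j | ⟨i, j⟩
  · exact ((hsetup.measW i).prodMk (hsetup.measA i)).comap_le
  · exact ((hsetup.measX j).prodMk (hsetup.measB j)).comap_le
  · exact (hsetup.measV i j).comap_le

theorem familySigma_le (hsetup : DyadicSetup μ W A X B V) (S : Set Idx) :
    familySigma W A X B V S ≤ mΩ :=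
  iSup₂_le fun u _ => hsetup.comap_fam_le u

theorem indep_familySigma (hsetup : DyadicSetup μ W A X B V) (hST : Disjoint S T) :
    Indep (familySigma W A X B V S) (familySigma W A X B V T) μ :=
  indep_iSup_of_disjoint hsetup.comap_fam_le hsetup.indep hST

end DyadicSetup

variable [mΩ : MeasurableSpace Ω] {μ : Measure Ω} {g : 𝒲 → 𝒳 → 𝒜 → ℬ → 𝒱 → (Fin d → ℝ)}
  {N M t : ℕ}

theorem measurable_Zmds
    (hg : Measurable fun p : 𝒲 × 𝒳 × 𝒜 × ℬ × 𝒱 => g p.1 p.2.1 p.2.2.1 p.2.2.2.1 p.2.2.2.2)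
    (t : ℕ) : Measurable[familySigma W A X B V (zmdsSupport N M t)] (Zmds μ g W A X B V N M t) := by
  obtain h | ⟨h₁, h₂⟩ | h : t ≤ N ∨ (N < t ∧ t ≤ N + M) ∨ N + M < t := by omega
  · rw [Zmds_of_le h, zmdsSupport, if_pos (by omega), freshIndex, if_pos h]
    exact ((stronglyMeasurable_condExp.mono
      (comap_fam_le_familySigma (Set.mem_singleton _))).const_smul _).measurable
  · rw [Zmds_of_lt_of_le h₁ h₂, zmdsSupport, if_pos h₂, freshIndex, if_neg h₁.not_ge, if_pos h₂]
    exact ((stronglyMeasurable_condExp.mono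
      (comap_fam_le_familySigma (Set.mem_singleton _))).const_smul _).measurable
  · rw [Zmds_of_lt h, zmdsSupport, if_neg h.not_ge, freshIndex, if_neg (by omega),
      if_neg h.not_ge]
    obtain ⟨i, j⟩ := pairIndex N M t
    have hsbar : StronglyMeasurable[familySigma W A X B V
        {.inl i, .inr (.inl j), .inr (.inr (i, j))}] (sbar μ g W A X B V i j) :=
      stronglyMeasurable_condExp.mono ((comap_WXAB_eq_familySigma i j).trans_le
        (familySigma_mono (by simp [Set.insert_subset_iff])))
    exact (((measurable_score_familySigma hg (by simp) (by simp) (by simp)).stronglyMeasurable.sub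
      hsbar).const_smul _).measurable

theorem natFilt_le_familySigma_compl_freshIndex
    (hg : Measurable fun p : 𝒲 × 𝒳 × 𝒜 × ℬ × 𝒱 => g p.1 p.2.1 p.2.2.1 p.2.2.2.1 p.2.2.2.2)
    (t : ℕ) :
    natFilt μ g W A X B V N M (t - 1) ≤ familySigma W A X B V {freshIndex N M t}ᶜ := by
  refine iSup₂_le fun r hr => ?_
  rw [Finset.mem_Icc] at hr
  exact measurable_iff_comap_le.mp ((measurable_Zmds hg r).mono (familySigma_mono
    (Set.subset_compl_singleton_iff.mpr (freshIndex_notMem_zmdsSupport (by omega)))) le_rfl)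

theorem integral_sbar [IsFiniteMeasure μ] (hsetup : DyadicSetup μ W A X B V) {i j : ℕ}
    (hmean : ∫ ω, score g W A X B V i j ω ∂μ = 0) : ∫ ω, sbar μ g W A X B V i j ω ∂μ = 0 := by
  rw [sbar, integral_condExp ((hsetup.measW i).prodMk ((hsetup.measX j).prodMk
    ((hsetup.measA i).prodMk (hsetup.measB j)))).comap_le, hmean]

theorem integral_Zmds_of_le [IsFiniteMeasure μ] (hsetup : DyadicSetup μ W A X B V)
    (hmean : ∀ i j, ∫ ω, score g W A X B V i j ω ∂μ = 0) (h : t ≤ N + M) :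
    ∫ ω, Zmds μ g W A X B V N M t ω ∂μ = 0 := by
  by_cases h₁ : t ≤ N
  · rw [Zmds_of_le h₁, Pi.smul_def, integral_smul, sbarc,
      integral_condExp ((hsetup.measW t).prodMk (hsetup.measA t)).comap_le,
      integral_sbar hsetup (hmean t 1), smul_zero]
  · rw [Zmds_of_lt_of_le (not_le.mp h₁) h, Pi.smul_def, integral_smul, sbarp,
      integral_condExp ((hsetup.measX (t - N)).prodMk (hsetup.measB (t - N))).comap_le,
      integral_sbar hsetup (hmean 1 (t - N)), smul_zero]

theorem condExp_score_familySigma_compl [IsFiniteMeasure μ] (hsetup : DyadicSetup μ W A X B V)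
    (hg : Measurable fun p : 𝒲 × 𝒳 × 𝒜 × ℬ × 𝒱 => g p.1 p.2.1 p.2.2.1 p.2.2.2.1 p.2.2.2.2)
    {i j : ℕ} (hint : Integrable (score g W A X B V i j) μ) :
    μ[score g W A X B V i j | familySigma W A X B V {.inr (.inr (i, j))}ᶜ]
      =ᵐ[μ] sbar μ g W A X B V i j := by
  have hsplit : ({.inr (.inr (i, j))}ᶜ : Set Idx) =
      {.inl i, .inr (.inl j)} ∪ {.inl i, .inr (.inl j), .inr (.inr (i, j))}ᶜ := by
    ext (_ | _ | _) <;>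
      simp only [Set.mem_compl_iff, Set.mem_union, Set.mem_insert_iff, Set.mem_singleton_iff,
        Sum.inl.injEq, Sum.inr.injEq, reduceCtorEq, not_false_eq_true, or_false, false_or, or_self,
        true_iff] <;>
      tauto
  rw [hsplit, familySigma_union, sbar, comap_WXAB_eq_familySigma (V := V)]
  exact condExp_sup_ae_eq_of_indep (hsetup.familySigma_le _) (hsetup.familySigma_le _)
    (familySigma_mono (by simp [Set.insert_subset_iff]))
    (hsetup.indep_familySigma disjoint_compl_right) hint
    (measurable_score_familySigma hg (by simp) (by simp) (by simp)).stronglyMeasurable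

theorem condExp_Zmds_familySigma_compl_freshIndex [IsFiniteMeasure μ]
    (hsetup : DyadicSetup μ W A X B V)
    (hg : Measurable fun p : 𝒲 × 𝒳 × 𝒜 × ℬ × 𝒱 => g p.1 p.2.1 p.2.2.1 p.2.2.2.1 p.2.2.2.2)
    (hint : ∀ i j, Integrable (score g W A X B V i j) μ)
    (hmean : ∀ i j, ∫ ω, score g W A X B V i j ω ∂μ = 0) :
    μ[Zmds μ g W A X B V N M t | familySigma W A X B V {freshIndex N M t}ᶜ] =ᵐ[μ] 0 := by
  by_cases h : t ≤ N + M
  · have hZ : StronglyMeasurable[familySigma W A X B V (zmdsSupport N M t)]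
        (Zmds μ g W A X B V N M t) := (measurable_Zmds hg t).stronglyMeasurable
    rw [zmdsSupport, if_pos h] at hZ
    refine (condExp_indep_eq (hsetup.familySigma_le _) (hsetup.familySigma_le _) hZ
      (hsetup.indep_familySigma disjoint_compl_right)).trans ?_
    rw [integral_Zmds_of_le hsetup hmean h]
    rfl
  · rw [Zmds_of_lt (not_le.mp h), freshIndex, if_neg (by omega), if_neg h]
    obtain ⟨i, j⟩ := pairIndex N M t
    have hsbar : μ[sbar μ g W A X B V i j | familySigma W A X B V {.inr (.inr (i, j))}ᶜ] =
        sbar μ g W A X B V i j :=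
      condExp_of_stronglyMeasurable (hsetup.familySigma_le _)
        (stronglyMeasurable_condExp.mono ((comap_WXAB_eq_familySigma i j).trans_le
          (familySigma_mono (by simp)))) integrable_condExp
    have hsbar_int : Integrable (sbar μ g W A X B V i j) μ := integrable_condExp
    filter_upwards [condExp_smul ((N : ℝ) * M)⁻¹ (score g W A X B V i j -
        sbar μ g W A X B V i j) (familySigma W A X B V {.inr (.inr (i, j))}ᶜ),
      condExp_sub (hint i j) hsbar_int (familySigma W A X B V {.inr (.inr (i, j))}ᶜ),
      condExp_score_familySigma_compl hsetup hg (hint i j)] with ω h₁ h₂ h₃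
    simp only [h₁, Pi.smul_apply, h₂, Pi.sub_apply, h₃, hsbar, sub_self, smul_zero, Pi.zero_apply]

end Development

variable {Ω 𝒲 𝒜 𝒳 ℬ 𝒱 : Type} [MeasurableSpace Ω] [MeasurableSpace 𝒲]
  [MeasurableSpace 𝒜] [MeasurableSpace 𝒳] [MeasurableSpace ℬ] [MeasurableSpace 𝒱]

variable (μ : Measure Ω) {d : ℕ}

theorem statement5
    (hμ : IsProbabilityMeasure μ)
    (W : ℕ → Ω → 𝒲) (A : ℕ → Ω → 𝒜) (X : ℕ → Ω → 𝒳) (B : ℕ → Ω → ℬ)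
    (V : ℕ → ℕ → Ω → 𝒱)
    (hsetup : DyadicSetup μ W A X B V)
    (g : 𝒲 → 𝒳 → 𝒜 → ℬ → 𝒱 → (Fin d → ℝ))
    (hg : Measurable fun p : 𝒲 × 𝒳 × 𝒜 × ℬ × 𝒱 =>
      g p.1 p.2.1 p.2.2.1 p.2.2.2.1 p.2.2.2.2)
    (hL2 : ∀ i j, MemLp (score g W A X B V i j) 2 μ)
    (hmean : ∀ i j, ∫ ω, score g W A X B V i j ω ∂μ = 0)
    (N M : ℕ) :
    ∀ t : ℕ, 1 ≤ t → t ≤ N + M + N * M →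
      μ[Zmds μ g W A X B V N M t | natFilt μ g W A X B V N M (t - 1)] =ᵐ[μ] 0 := by
  intro t _ _
  calc μ[Zmds μ g W A X B V N M t | natFilt μ g W A X B V N M (t - 1)]
      =ᵐ[μ] μ[μ[Zmds μ g W A X B V N M t | familySigma W A X B V {freshIndex N M t}ᶜ] |
          natFilt μ g W A X B V N M (t - 1)] :=
        (condExp_condExp_of_le (natFilt_le_familySigma_compl_freshIndex hg t)
          (hsetup.familySigma_le _)).symm
    _ =ᵐ[μ] μ[0 | natFilt μ g W A X B V N M (t - 1)] :=
        condExp_congr_ae (condExp_Zmds_familySigma_compl_freshIndex hsetup hg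
          (fun i j => (hL2 i j).integrable one_le_two) hmean)
    _ = 0 := condExp_zero

end SparseNet
end

section
/- Let R_{ij}, 1 ≤ i ≤ N, 1 ≤ j ≤ M, be random vectors in ℝ^{1+k} with first coordinate equal to 1 and ‖R_{ij}‖ ≤ C almost surely, and for ϑ ∈ ℝ^{1+k} define H_n(ϑ) = −(NM)^{-1} Σ_{i=1}^N Σ_{j=1}^M e(R_{ij}'ϑ)[1 − e(R_{ij}'ϑ)] R_{ij} R_{ij}'. Fix ᾱ > 0 and a bounded set B ⊂ ℝ^k. Then there is a constant L, depending only on ᾱ, C and B, such that for every n ≥ 1 and all θ = (α, β')', θ̃ = (α̃, β̃')' with α, α̃ ∈ (0, ᾱ] and β, β̃ ∈ B, writing θ_n = (ln(α/n), β')' and θ̃_n = (ln(α̃/n), β̃')', one has ‖n H_n(θ_n) − n H_n(θ̃_n)‖ ≤ L ‖θ − θ̃‖ almost surely. (Lipschitz continuity, uniformly in n, of the rescaled composite-likelihood Hessian under the sparse parametrization.) -/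
/-!
With the intercept `log (α / n)` one has `n * exp (R'ϑ) = α * exp s` where `s = Σ_{u ≥ 1} R_u β_u`,
so the rescaled weight `n * e(v) * (1 - e(v))` equals `n² y / (n + y)²` with `y = α * exp s`.
For every `n > 0` the map `y ↦ n² y / (n + y)²` is 1-Lipschitz on `[0, ∞)`, and `y` is Lipschitz
in `(α, β)` on `(0, ᾱ] × B` because `s ≤ C * sup_B ‖β‖`. Each entry of `n • H` averages such
weights against `R_a R_b`, with `|R_a R_b| ≤ C²`, so the bound does not depend on `n`, `N`, `M`
or the sample point.
-/

open MeasureTheory Filter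
open scoped BigOperators Topology

namespace SparseNet

/-- The logistic function `e(v) = exp(v)/(1 + exp(v))`. -/
noncomputable def logistic (v : ℝ) : ℝ := Real.exp v / (1 + Real.exp v)

/-- Frobenius norm of a real matrix. -/
noncomputable def frobNorm {m n : ℕ} (M : Matrix (Fin m) (Fin n) ℝ) : ℝ :=
  Real.sqrt (∑ a, ∑ b, (M a b) ^ 2)

/-- Euclidean norm of a real vector. -/
noncomputable def euclNorm {m : ℕ} (v : Fin m → ℝ) : ℝ :=
  Real.sqrt (∑ a, (v a) ^ 2)

/-- The composite-likelihood Hessian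
`H(ϑ) = −(NM)⁻¹ Σᵢ Σⱼ e(R_{ij}'ϑ)[1 − e(R_{ij}'ϑ)] R_{ij} R_{ij}'`. -/
noncomputable def Hess {Ω : Type} {k : ℕ} (R : ℕ → ℕ → Ω → Fin (k + 1) → ℝ)
    (N M : ℕ) (ϑ : Fin (k + 1) → ℝ) (ω : Ω) : Matrix (Fin (k + 1)) (Fin (k + 1)) ℝ :=
  Matrix.of fun a b => -(((N : ℝ) * M)⁻¹ *
    ∑ i ∈ Finset.Icc 1 N, ∑ j ∈ Finset.Icc 1 M,
      logistic (∑ u, R i j ω u * ϑ u) * (1 - logistic (∑ u, R i j ω u * ϑ u)) *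
        R i j ω a * R i j ω b)

open Real Finset

lemma abs_le_euclNorm {m : ℕ} (v : Fin m → ℝ) (a : Fin m) : |v a| ≤ euclNorm v := by
  rw [euclNorm, ← sqrt_sq_eq_abs]
  exact sqrt_le_sqrt (single_le_sum (f := fun b => v b ^ 2) (fun b _ => sq_nonneg _) (mem_univ a))

lemma euclNorm_tail_le {m : ℕ} (v : Fin (m + 1) → ℝ) : euclNorm (Fin.tail v) ≤ euclNorm v := by
  refine sqrt_le_sqrt ?_
  rw [Fin.sum_univ_succ]
  exact le_add_of_nonneg_left (sq_nonneg _)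

lemma euclNorm_le_sqrt_mul_norm {m : ℕ} (v : Fin m → ℝ) : euclNorm v ≤ √m * ‖v‖ := by
  rw [euclNorm, ← sqrt_sq (norm_nonneg v), ← sqrt_mul (Nat.cast_nonneg _)]
  refine sqrt_le_sqrt ?_
  calc ∑ a, v a ^ 2 ≤ ∑ _a : Fin m, ‖v‖ ^ 2 := sum_le_sum fun a _ => by
        rw [← sq_abs, ← Real.norm_eq_abs]
        exact pow_le_pow_left₀ (norm_nonneg _) (norm_le_pi_norm v a) 2
    _ = m * ‖v‖ ^ 2 := by simp

lemma abs_sum_mul_le_euclNorm_mul {m : ℕ} (v w : Fin m → ℝ) :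
    |∑ a, v a * w a| ≤ euclNorm v * euclNorm w :=
  calc |∑ a, v a * w a| ≤ ∑ a, |v a| * |w a| := by
        simpa only [abs_mul] using abs_sum_le_sum_abs (fun a => v a * w a) univ
    _ ≤ √(∑ a, |v a| ^ 2) * √(∑ a, |w a| ^ 2) := sum_mul_le_sqrt_mul_sqrt _ _ _
    _ = euclNorm v * euclNorm w := by simp only [sq_abs, euclNorm]

lemma frobNorm_le_of_forall_abs_le {m n : ℕ} {A : Matrix (Fin m) (Fin n) ℝ} {c : ℝ}
    (hc : 0 ≤ c) (h : ∀ a b, |A a b| ≤ c) : frobNorm A ≤ √(m * n) * c := by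
  rw [frobNorm, ← sqrt_sq hc, ← sqrt_mul (by positivity)]
  refine sqrt_le_sqrt ?_
  calc ∑ a, ∑ b, A a b ^ 2 ≤ ∑ _a : Fin m, ∑ _b : Fin n, c ^ 2 :=
        sum_le_sum fun a _ => sum_le_sum fun b _ => by
          rw [← sq_abs]
          exact pow_le_pow_left₀ (abs_nonneg _) (h a b) 2
    _ = m * n * c ^ 2 := by simp [mul_assoc]

lemma abs_inv_mul_sum_Icc_le {N M : ℕ} {x : ℕ → ℕ → ℝ} {c : ℝ} (hc : 0 ≤ c)
    (h : ∀ i ∈ Icc 1 N, ∀ j ∈ Icc 1 M, |x i j| ≤ c) :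
    |((N : ℝ) * M)⁻¹ * ∑ i ∈ Icc 1 N, ∑ j ∈ Icc 1 M, x i j| ≤ c := by
  have hsum : |∑ i ∈ Icc 1 N, ∑ j ∈ Icc 1 M, x i j| ≤ N * M * c :=
    calc _ ≤ ∑ i ∈ Icc 1 N, ∑ j ∈ Icc 1 M, |x i j| :=
          (abs_sum_le_sum_abs _ _).trans (sum_le_sum fun i _ => abs_sum_le_sum_abs _ _)
      _ ≤ ∑ i ∈ Icc 1 N, ∑ j ∈ Icc 1 M, c :=
          sum_le_sum fun i hi => sum_le_sum fun j hj => h i hi j hj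
      _ = N * M * c := by simp [mul_assoc]
  rw [abs_mul, abs_of_nonneg (by positivity)]
  rcases eq_or_ne ((N : ℝ) * M) 0 with h0 | h0
  · simpa [h0] using hc
  · calc _ ≤ ((N : ℝ) * M)⁻¹ * (N * M * c) := by gcongr
      _ = c := by rw [← mul_assoc, inv_mul_cancel₀ h0, one_mul]

lemma abs_exp_sub_exp_le {a b S : ℝ} (ha : a ≤ S) (hb : b ≤ S) :
    |exp a - exp b| ≤ exp S * |a - b| := by
  simpa only [Real.norm_eq_abs] using (convex_Iic S).norm_image_sub_le_of_norm_deriv_le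
    (fun x _ => differentiableAt_exp)
    (fun x hx => by
      rw [Real.deriv_exp, Real.norm_eq_abs, abs_of_pos (exp_pos x)]
      exact exp_le_exp.2 hx)
    hb ha

lemma abs_sq_mul_div_add_sq_sub_le {n x y : ℝ} (hn : 0 < n) (hx : 0 ≤ x) (hy : 0 ≤ y) :
    |n ^ 2 * x / (n + x) ^ 2 - n ^ 2 * y / (n + y) ^ 2| ≤ |x - y| := by
  have hnx : 0 < n + x := by linarith
  have hny : 0 < n + y := by linarith
  have key : n ^ 2 * x / (n + x) ^ 2 - n ^ 2 * y / (n + y) ^ 2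
      = (x - y) * ((n ^ 2 - x * y) / ((n + x) * (n + y)) * (n ^ 2 / ((n + x) * (n + y)))) := by
    field_simp
    ring
  rw [key, abs_mul]
  refine mul_le_of_le_one_right (abs_nonneg _) ?_
  have hden : 0 < (n + x) * (n + y) := by positivity
  rw [abs_mul, abs_div, abs_of_pos hden, abs_of_pos (div_pos (by positivity) hden)]
  refine mul_le_one₀ ?_ (by positivity) ?_
  · rw [div_le_one (by positivity), abs_le]; constructor <;> nlinarith
  · rw [div_le_one (by positivity)]; nlinarith

noncomputable def logisticVar (v : ℝ) : ℝ := logistic v * (1 - logistic v)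

lemma mul_logisticVar_log_div_add {n α : ℝ} (hn : 0 < n) (hα : 0 < α) (s : ℝ) :
    n * logisticVar (log (α / n) + s) = n ^ 2 * (α * exp s) / (n + α * exp s) ^ 2 := by
  have hpos : 0 < n + α * exp s := by positivity
  rw [logisticVar, logistic, exp_add, exp_log (div_pos hα hn)]
  field_simp
  ring

lemma abs_mul_logisticVar_sub_le {n αbar S α α' s s' : ℝ} (hn : 0 < n) (hα : 0 < α)
    (hα' : α' ∈ Set.Ioc 0 αbar) (hs : s ≤ S) (hs' : s' ≤ S) :
    |n * logisticVar (log (α / n) + s) - n * logisticVar (log (α' / n) + s')|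
      ≤ exp S * (|α - α'| + αbar * |s - s'|) := by
  obtain ⟨hα'0, hα'bar⟩ := hα'
  rw [mul_logisticVar_log_div_add hn hα, mul_logisticVar_log_div_add hn hα'0]
  calc _ ≤ |α * exp s - α' * exp s'| :=
        abs_sq_mul_div_add_sq_sub_le hn (by positivity) (by positivity)
    _ = |(α - α') * exp s + α' * (exp s - exp s')| := by ring_nf
    _ ≤ |α - α'| * exp s + α' * |exp s - exp s'| := by
        refine (abs_add_le _ _).trans_eq ?_
        rw [abs_mul, abs_mul, abs_of_pos (exp_pos s), abs_of_pos hα'0]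
    _ ≤ |α - α'| * exp S + αbar * (exp S * |s - s'|) := by
        have : 0 ≤ αbar := hα'0.le.trans hα'bar
        gcongr
        exact abs_exp_sub_exp_le hs hs'
    _ = exp S * (|α - α'| + αbar * |s - s'|) := by ring

lemma sum_mul_cons_of_head_eq_one {k : ℕ} {ρ : Fin (k + 1) → ℝ} (hρ : ρ 0 = 1) (x : ℝ)
    (β : Fin k → ℝ) :
    ∑ u, ρ u * (Fin.cons x β : Fin (k + 1) → ℝ) u = x + ∑ u, Fin.tail ρ u * β u := by
  simp [Fin.sum_univ_succ, hρ, Fin.tail]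

lemma abs_mul_logisticVar_sparse_sub_le {k : ℕ} {n αbar C r α α' : ℝ} {β β' : Fin k → ℝ}
    {ρ : Fin (k + 1) → ℝ} (hn : 0 < n) (hα : 0 < α) (hα' : α' ∈ Set.Ioc 0 αbar)
    (hρ0 : ρ 0 = 1) (hρ : euclNorm ρ ≤ C) (hβ : euclNorm β ≤ r) (hβ' : euclNorm β' ≤ r) :
    |n * logisticVar (∑ u, ρ u * (Fin.cons (log (α / n)) β : Fin (k + 1) → ℝ) u) -
        n * logisticVar (∑ u, ρ u * (Fin.cons (log (α' / n)) β' : Fin (k + 1) → ℝ) u)|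
      ≤ exp (C * r) * (1 + αbar * C) * √((α - α') ^ 2 + ∑ a, (β a - β' a) ^ 2) := by
  set D := √((α - α') ^ 2 + ∑ a, (β a - β' a) ^ 2)
  have hsq : 0 ≤ ∑ a, (β a - β' a) ^ 2 := sum_nonneg fun a _ => sq_nonneg _
  have hαD : |α - α'| ≤ D := by
    rw [← sqrt_sq_eq_abs]; exact sqrt_le_sqrt (le_add_of_nonneg_right hsq)
  have hβD : euclNorm (β - β') ≤ D := sqrt_le_sqrt (le_add_of_nonneg_left (sq_nonneg _))
  have htail : euclNorm (Fin.tail ρ) ≤ C := (euclNorm_tail_le ρ).trans hρ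
  have hC : 0 ≤ C := (sqrt_nonneg _).trans htail
  have hs : ∀ γ : Fin k → ℝ, euclNorm γ ≤ r → ∑ u, Fin.tail ρ u * γ u ≤ C * r := fun γ hγ =>
    (le_abs_self _).trans ((abs_sum_mul_le_euclNorm_mul _ _).trans
      (mul_le_mul htail hγ (sqrt_nonneg _) hC))
  have hsD : |∑ u, Fin.tail ρ u * β u - ∑ u, Fin.tail ρ u * β' u| ≤ C * D := by
    rw [← sum_sub_distrib]
    simp_rw [← mul_sub]
    exact (abs_sum_mul_le_euclNorm_mul _ (β - β')).trans
      (mul_le_mul htail hβD (sqrt_nonneg _) hC)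
  rw [sum_mul_cons_of_head_eq_one hρ0, sum_mul_cons_of_head_eq_one hρ0]
  calc _ ≤ exp (C * r) * (|α - α'| + αbar * |∑ u, Fin.tail ρ u * β u - ∑ u, Fin.tail ρ u * β' u|) :=
        abs_mul_logisticVar_sub_le hn hα hα' (hs β hβ) (hs β' hβ')
    _ ≤ exp (C * r) * (D + αbar * (C * D)) := by
        have : 0 ≤ αbar := hα'.1.le.trans hα'.2
        gcongr
    _ = exp (C * r) * (1 + αbar * C) * D := by ring

lemma smul_Hess_sub_smul_Hess_apply {Ω : Type} {k : ℕ} (R : ℕ → ℕ → Ω → Fin (k + 1) → ℝ)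
    (N M : ℕ) (n : ℝ) (ϑ ϑ' : Fin (k + 1) → ℝ) (ω : Ω) (a b : Fin (k + 1)) :
    (n • Hess R N M ϑ ω - n • Hess R N M ϑ' ω) a b =
      ((N : ℝ) * M)⁻¹ * ∑ i ∈ Icc 1 N, ∑ j ∈ Icc 1 M,
        (n * logisticVar (∑ u, R i j ω u * ϑ' u) - n * logisticVar (∑ u, R i j ω u * ϑ u)) *
          R i j ω a * R i j ω b := by
  simp only [Hess, logisticVar, Matrix.sub_apply, Matrix.smul_apply, Matrix.of_apply, smul_eq_mul]
  rw [show ∀ c A B : ℝ, n * -(c * A) - n * -(c * B) = c * (n * B - n * A) from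
    fun _ _ _ => by ring]
  simp only [mul_sum, ← sum_sub_distrib]
  refine sum_congr rfl fun i _ => sum_congr rfl fun j _ => ?_
  ring

lemma frobNorm_smul_Hess_sub_le {Ω : Type} {k : ℕ} (R : ℕ → ℕ → Ω → Fin (k + 1) → ℝ)
    (N M : ℕ) (n : ℝ) (ϑ ϑ' : Fin (k + 1) → ℝ) (ω : Ω) {C E : ℝ} (hC : 0 ≤ C) (hE : 0 ≤ E)
    (hR : ∀ i ∈ Icc 1 N, ∀ j ∈ Icc 1 M, euclNorm (R i j ω) ≤ C)
    (hw : ∀ i ∈ Icc 1 N, ∀ j ∈ Icc 1 M,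
      |n * logisticVar (∑ u, R i j ω u * ϑ u) - n * logisticVar (∑ u, R i j ω u * ϑ' u)| ≤ E) :
    frobNorm (n • Hess R N M ϑ ω - n • Hess R N M ϑ' ω) ≤ (k + 1) * (E * C ^ 2) := by
  have hentry : ∀ a b, |(n • Hess R N M ϑ ω - n • Hess R N M ϑ' ω) a b| ≤ E * C ^ 2 := by
    intro a b
    rw [smul_Hess_sub_smul_Hess_apply]
    refine abs_inv_mul_sum_Icc_le (by positivity) fun i hi j hj => ?_
    rw [abs_mul, abs_mul, abs_sub_comm, sq, ← mul_assoc]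
    have hRa := (abs_le_euclNorm (R i j ω) a).trans (hR i hi j hj)
    have hRb := (abs_le_euclNorm (R i j ω) b).trans (hR i hi j hj)
    gcongr
    exact hw i hi j hj
  calc _ ≤ √(↑(k + 1) * ↑(k + 1)) * (E * C ^ 2) :=
        frobNorm_le_of_forall_abs_le (by positivity) hentry
    _ = (k + 1) * (E * C ^ 2) := by rw [sqrt_mul_self (Nat.cast_nonneg _)]; push_cast; rfl

/-- Lipschitz continuity, uniformly in `n` (and in the data), of the
rescaled composite-likelihood Hessian under the sparse parametrization
`θ_n = (ln(α/n), β')'`, with Lipschitz constant depending only on `ᾱ`, `C` and `B`. -/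
theorem statement13 (k : ℕ) (αbar C : ℝ) (hαbar : 0 < αbar) (hC : 0 < C)
    (Bset : Set (Fin k → ℝ)) (hBbd : Bornology.IsBounded Bset) :
    ∃ L : ℝ, ∀ (Ω : Type) (_ : MeasurableSpace Ω) (μ : Measure Ω),
      IsProbabilityMeasure μ →
      ∀ (N M : ℕ) (R : ℕ → ℕ → Ω → Fin (k + 1) → ℝ),
      (∀ i j, ∀ᵐ ω ∂μ, R i j ω 0 = 1 ∧ euclNorm (R i j ω) ≤ C) →
      ∀ n : ℕ, 1 ≤ n →
      ∀ α αt : ℝ, α ∈ Set.Ioc 0 αbar → αt ∈ Set.Ioc 0 αbar →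
      ∀ β ∈ Bset, ∀ βt ∈ Bset,
      ∀ᵐ ω ∂μ,
        frobNorm
            ((n : ℝ) • Hess R N M (Fin.cons (Real.log (α / n)) β) ω -
              (n : ℝ) • Hess R N M (Fin.cons (Real.log (αt / n)) βt) ω) ≤
          L * Real.sqrt ((α - αt) ^ 2 + ∑ a, (β a - βt a) ^ 2) := by
  obtain ⟨r₀, hr₀⟩ := isBounded_iff_forall_norm_le.1 hBbd
  have hBr : ∀ γ ∈ Bset, euclNorm γ ≤ √k * r₀ := fun γ hγ =>
    (euclNorm_le_sqrt_mul_norm γ).trans (by gcongr; exact hr₀ γ hγ)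
  refine ⟨(k + 1) * (exp (C * (√k * r₀)) * (1 + αbar * C) * C ^ 2), ?_⟩
  intro Ω _ μ _ N M R hR n hn α αt hα hαt β hβ βt hβt
  have hae : ∀ᵐ ω ∂μ, ∀ i j, R i j ω 0 = 1 ∧ euclNorm (R i j ω) ≤ C := by
    simpa only [ae_all_iff] using hR
  filter_upwards [hae] with ω hω
  have hn₀ : (0 : ℝ) < n := by exact_mod_cast hn
  calc _ ≤ (k + 1) * (exp (C * (√k * r₀)) * (1 + αbar * C) *
          √((α - αt) ^ 2 + ∑ a, (β a - βt a) ^ 2) * C ^ 2) :=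
        frobNorm_smul_Hess_sub_le R N M n _ _ ω hC.le (by positivity) (fun i _ j _ => (hω i j).2)
          fun i _ j _ => abs_mul_logisticVar_sparse_sub_le hn₀ hα.1 hαt (hω i j).1 (hω i j).2
            (hBr β hβ) (hBr βt hβt)
    _ = _ := by ring

end SparseNet
end

section
/- Let (W_i)_{i≥1} be i.i.d. random elements, let x be fixed, let z(·, x) be a bounded measurable ℝ^k-valued function, α₀ > 0, β₀ ∈ ℝ^k, and let (N_n) be positive integers with N_n/n → 1 − φ ∈ (0,1). Then the predicted aggregate, Σ_{i=1}^{N_n} e(ln(α₀/n) + z(W_i, x)'β₀), converges in probability to γ₀(x) = (1 − φ) α₀ E[exp(z(W_1, x)'β₀)] as n → ∞. (Total expected sales of a product with attributes x converge to a finite limit under sparse network asymptotics.) -/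
/-!
For `v = ln(α₀/n) + u` with `u` bounded, `e(v) = exp v - O(exp (2v))` and `exp v = (α₀/n) exp u`
is of order `1/n`, so replacing each of the `N_n ≍ n` logistic terms by `(α₀/n) exp u` costs
`O(N_n/n²) → 0` deterministically. The replaced sum is `α₀ (N_n/n)` times the empirical mean of
`exp(z(W_i, x)'β₀)` over the first `N_n` draws, which converges almost surely by the strong law
of large numbers; almost sure convergence gives convergence in probability.
-/

open MeasureTheory ProbabilityTheory Filter
open scoped BigOperators Topology

namespace SparseNet

open Finset Real

lemma continuous_logistic : Continuous logistic :=
  continuous_exp.div (continuous_const.add continuous_exp) fun v => by positivity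

lemma abs_exp_sub_logistic_le (v : ℝ) : |exp v - logistic v| ≤ exp v ^ 2 := by
  have hdiff : exp v - logistic v = exp v ^ 2 / (1 + exp v) := by
    unfold logistic; field_simp; ring
  rw [hdiff, abs_of_nonneg (by positivity)]
  exact div_le_self (by positivity) (by linarith [exp_pos v])

lemma abs_logistic_log_add_sub_le {p : ℝ} (hp : 0 < p) (u : ℝ) :
    |logistic (log p + u) - p * exp u| ≤ (p * exp u) ^ 2 := by
  rw [abs_sub_comm, ← exp_log hp, ← exp_add, exp_log hp]
  exact abs_exp_sub_logistic_le _

lemma abs_sum_logistic_log_add_sub_le {ι : Type*} (s : Finset ι) {p M : ℝ} (hp : 0 < p)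
    {g : ι → ℝ} (hg : ∀ i, g i ≤ M) :
    |∑ i ∈ s, logistic (log p + g i) - p * ∑ i ∈ s, exp (g i)| ≤ #s * (p * exp M) ^ 2 := by
  rw [mul_sum, ← sum_sub_distrib]
  calc |∑ i ∈ s, (logistic (log p + g i) - p * exp (g i))|
      ≤ ∑ i ∈ s, |logistic (log p + g i) - p * exp (g i)| := abs_sum_le_sum_abs _ _
    _ ≤ ∑ _i ∈ s, (p * exp M) ^ 2 := by
      gcongr with i
      refine (abs_logistic_log_add_sub_le hp _).trans ?_
      gcongr
      exact hg i
    _ = #s * (p * exp M) ^ 2 := by rw [sum_const, nsmul_eq_mul]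

lemma tendsto_atTop_of_tendsto_div_pos {N : ℕ → ℕ} {c : ℝ} (hc : 0 < c)
    (hN : Tendsto (fun n => (N n : ℝ) / n) atTop (𝓝 c)) : Tendsto N atTop atTop := by
  have hmul : Tendsto (fun n : ℕ => (N n : ℝ) / n * n) atTop atTop :=
    hN.pos_mul_atTop hc tendsto_natCast_atTop_atTop
  refine tendsto_natCast_atTop_iff.mp (hmul.congr' ?_)
  filter_upwards [eventually_ne_atTop 0] with n hn
  exact div_mul_cancel₀ _ (Nat.cast_ne_zero.mpr hn)

lemma tendsto_sum_range_div_of_tendsto_average {f : ℕ → ℝ} {L c : ℝ} {N : ℕ → ℕ}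
    (hf : Tendsto (fun m : ℕ => (∑ i ∈ range m, f i) / m) atTop (𝓝 L)) (hc : 0 < c)
    (hN : Tendsto (fun n => (N n : ℝ) / n) atTop (𝓝 c)) :
    Tendsto (fun n : ℕ => (∑ i ∈ range (N n), f i) / n) atTop (𝓝 (L * c)) := by
  refine ((hf.comp (tendsto_atTop_of_tendsto_div_pos hc hN)).mul hN).congr fun n => ?_
  rcases eq_or_ne (N n) 0 with h | h
  · simp [h]
  · exact div_mul_div_cancel₀ (Nat.cast_ne_zero.mpr h)

theorem tendsto_sum_logistic_of_tendsto_average {g : ℕ → ℝ} {M α L c : ℝ} {N : ℕ → ℕ}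
    (hg : ∀ i, g i ≤ M) (hα : 0 < α)
    (havg : Tendsto (fun m : ℕ => (∑ i ∈ range m, exp (g (i + 1))) / m) atTop (𝓝 L))
    (hc : 0 < c) (hN : Tendsto (fun n => (N n : ℝ) / n) atTop (𝓝 c)) :
    Tendsto (fun n : ℕ => ∑ i ∈ Icc 1 (N n), logistic (log (α / n) + g i)) atTop
      (𝓝 (c * α * L)) := by
  have hshift : ∀ m, ∑ i ∈ Icc 1 m, exp (g i) = ∑ i ∈ range m, exp (g (i + 1)) := by
    intro m
    rw [← Ico_add_one_right_eq_Icc, sum_Ico_eq_sum_range, Nat.add_sub_cancel]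
    simp only [add_comm]
  have hmain : Tendsto (fun n : ℕ => α / n * ∑ i ∈ Icc 1 (N n), exp (g i)) atTop
      (𝓝 (c * α * L)) := by
    have := (tendsto_sum_range_div_of_tendsto_average havg hc hN).const_mul α
    refine (this.congr fun n => ?_).trans_eq ?_
    · rw [hshift]; ring
    · ring_nf
  have herr : Tendsto (fun n : ℕ => (N n : ℝ) / n * ((α * exp M) ^ 2 / n)) atTop (𝓝 0) := by
    simpa using hN.mul (tendsto_const_div_atTop_nhds_zero_nat ((α * exp M) ^ 2))
  have hdiff : Tendsto (fun n : ℕ => ∑ i ∈ Icc 1 (N n), logistic (log (α / n) + g i) -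
      α / n * ∑ i ∈ Icc 1 (N n), exp (g i)) atTop (𝓝 0) := by
    refine squeeze_zero_norm' ?_ herr
    filter_upwards [eventually_gt_atTop 0] with n hn
    refine (abs_sum_logistic_log_add_sub_le _ (by positivity) hg).trans_eq ?_
    rw [Nat.card_Icc, Nat.add_sub_cancel]
    ring
  simpa using hmain.add hdiff

lemma abs_sum_mul_le {ι : Type*} [Fintype ι] {x β : ι → ℝ} {C : ℝ} (hx : ∀ a, |x a| ≤ C) :
    |∑ a, x a * β a| ≤ C * ∑ a, |β a| := by
  rw [mul_sum]
  refine (abs_sum_le_sum_abs _ _).trans (sum_le_sum fun a _ => ?_)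
  rw [abs_mul]
  exact mul_le_mul_of_nonneg_right (hx a) (abs_nonneg _)

theorem ae_tendsto_average_comp_succ {Ω 𝒲 : Type*} [MeasurableSpace Ω] [MeasurableSpace 𝒲]
    {μ : Measure Ω} {W : ℕ → Ω → 𝒲} (hindep : iIndepFun W μ)
    (hident : ∀ i, IdentDistrib (W i) (W 1) μ μ) {h : 𝒲 → ℝ} (hh : Measurable h)
    (hint : Integrable (fun ω => h (W 1 ω)) μ) :
    ∀ᵐ ω ∂μ, Tendsto (fun m : ℕ => (∑ i ∈ range m, h (W (i + 1) ω)) / m) atTop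
      (𝓝 (∫ ω, h (W 1 ω) ∂μ)) :=
  strong_law_ae_real (fun i ω => h (W (i + 1) ω)) hint
    (fun i j hij => (hindep.indepFun (by simpa using hij)).comp hh hh)
    (fun i => ((hident (i + 1)).trans (hident 1).symm).comp hh)

theorem statement18_general
    {Ω 𝒲 : Type} [MeasurableSpace Ω] [MeasurableSpace 𝒲]
    (μ : Measure Ω) [IsProbabilityMeasure μ]
    (W : ℕ → Ω → 𝒲)
    (hindep : iIndepFun W μ)
    (hident : ∀ i, IdentDistrib (W i) (W 1) μ μ)
    {k : ℕ} (ζ : 𝒲 → Fin k → ℝ) (hζmeas : Measurable ζ)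
    (hζbd : ∃ C : ℝ, ∀ w a, |ζ w a| ≤ C)
    (α₀ : ℝ) (hα₀ : 0 < α₀) (β₀ : Fin k → ℝ)
    (φ : ℝ) (hφ : φ ∈ Set.Ioo (0 : ℝ) 1)
    (N : ℕ → ℕ)
    (hNφ : Tendsto (fun n : ℕ => (N n : ℝ) / n) atTop (𝓝 (1 - φ))) :
    ∀ ε : ℝ, 0 < ε →
      Tendsto (fun n : ℕ =>
          μ {ω | ε ≤ |(∑ i ∈ Finset.Icc 1 (N n),
              logistic (Real.log (α₀ / n) + ∑ a, ζ (W i ω) a * β₀ a)) -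
            (1 - φ) * α₀ * ∫ ω', Real.exp (∑ a, ζ (W 1 ω') a * β₀ a) ∂μ|})
        atTop (𝓝 0) := by
  intro ε hε
  obtain ⟨C, hC⟩ := hζbd
  set g : 𝒲 → ℝ := fun w => ∑ a, ζ w a * β₀ a
  have hg_meas : Measurable g :=
    Finset.measurable_sum _ fun a _ => ((measurable_pi_apply a).comp hζmeas).mul_const _
  have hg_le : ∀ w, g w ≤ C * ∑ a, |β₀ a| := fun w => (le_abs_self _).trans (abs_sum_mul_le (hC w))
  have hW : ∀ i, AEMeasurable (W i) μ := fun i => (hident i).aemeasurable_fst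
  have hint : Integrable (fun ω => exp (g (W 1 ω))) μ := by
    refine .of_bound ((measurable_exp.comp hg_meas).comp_aemeasurable (hW 1)).aestronglyMeasurable
      (exp (C * ∑ a, |β₀ a|)) (ae_of_all _ fun ω => ?_)
    rw [norm_of_nonneg (exp_pos _).le]
    exact exp_le_exp.2 (hg_le _)
  have hconv : ∀ᵐ ω ∂μ,
      Tendsto (fun n : ℕ => ∑ i ∈ Icc 1 (N n), logistic (log (α₀ / n) + g (W i ω))) atTop
        (𝓝 ((1 - φ) * α₀ * ∫ ω', exp (g (W 1 ω')) ∂μ)) := by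
    filter_upwards [ae_tendsto_average_comp_succ hindep hident (measurable_exp.comp hg_meas) hint]
      with ω hω
    exact tendsto_sum_logistic_of_tendsto_average (fun i => hg_le (W i ω)) hα₀ hω
      (by linarith [hφ.2]) hNφ
  have hmeas : ∀ n : ℕ, AEStronglyMeasurable
      (fun ω => ∑ i ∈ Icc 1 (N n), logistic (log (α₀ / n) + g (W i ω))) μ := fun n =>
    (Finset.aemeasurable_fun_sum _ fun i _ => (continuous_logistic.measurable.comp
      (measurable_const.add hg_meas)).comp_aemeasurable (hW i)).aestronglyMeasurable
  simpa [Real.dist_eq] using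
    tendstoInMeasure_iff_dist.mp (tendstoInMeasure_of_tendsto_ae hmeas hconv) ε hε

/-- the predicted aggregate `Σ_{i=1}^{N_n} e(ln(α₀/n) + z(W_i,x)'β₀)`
converges in probability to `γ₀(x) = (1−φ) α₀ E[exp(z(W_1,x)'β₀)]`.  Here `ζ = z(·, x)`
for the fixed product attribute `x`. -/
theorem statement18
    {Ω 𝒲 : Type} [MeasurableSpace Ω] [MeasurableSpace 𝒲]
    (μ : Measure Ω) [IsProbabilityMeasure μ]
    (W : ℕ → Ω → 𝒲) (hWmeas : ∀ i, Measurable (W i))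
    (hindep : iIndepFun W μ)
    (hident : ∀ i, IdentDistrib (W i) (W 1) μ μ)
    {k : ℕ} (ζ : 𝒲 → Fin k → ℝ) (hζmeas : Measurable ζ)
    (hζbd : ∃ C : ℝ, ∀ w a, |ζ w a| ≤ C)
    (α₀ : ℝ) (hα₀ : 0 < α₀) (β₀ : Fin k → ℝ)
    (φ : ℝ) (hφ : φ ∈ Set.Ioo (0 : ℝ) 1)
    (N : ℕ → ℕ)
    (hNφ : Tendsto (fun n : ℕ => (N n : ℝ) / n) atTop (𝓝 (1 - φ))) :
    ∀ ε : ℝ, 0 < ε →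
      Tendsto (fun n : ℕ =>
          μ {ω | ε ≤ |(∑ i ∈ Finset.Icc 1 (N n),
              logistic (Real.log (α₀ / n) + ∑ a, ζ (W i ω) a * β₀ a)) -
            (1 - φ) * α₀ * ∫ ω', Real.exp (∑ a, ζ (W 1 ω') a * β₀ a) ∂μ|})
        atTop (𝓝 0) :=
  statement18_general μ W hindep hident ζ hζmeas hζbd α₀ hα₀ β₀ φ hφ N hNφ

end SparseNet
end
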